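/- Let g: V̄ → ℝ with Σ_v g(v) = 0 realize λ₁(Ḡ) for a finite graph Ḡ, and let Γ be a metric graph with model Ḡ in which disjoint disks B(v) of equal volume 1/16 surround each vertex and the complementary segments have length between 1/8 and 1/2. Define f on Γ to equal g(v) on B(v) and linear interpolation on segments, and let m be the mean of f. Then ∫_Γ f'² dx ≤ 8 Σ_{{u,v} ∈ Ē}(g(u) − g(v))² and ∫_Γ (f − m)² dx ≥ (1/16) Σ_v g(v)², hence λ₁(Γ) ≤ 128·λ₁(Ḡ). -/

import Mathlib

open Finset MeasureTheory

/-- Dirichlet energy of `g`: sum of `(g u - g v)²` over the edges of `G`. -/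
noncomputable def edgeEnergy {V : Type*} [Fintype V] [DecidableEq V]
    (G : SimpleGraph V) [DecidableRel G.Adj] (g : V → ℝ) : ℝ :=
  ∑ e ∈ G.edgeFinset,
    Sym2.lift ⟨fun u v => (g u - g v) ^ 2, fun u v => by ring⟩ e

/-- The smallest nonzero discrete Laplacian eigenvalue, via the variational
characterization over mean-zero test functions. -/
noncomputable def lambdaOne {V : Type*} [Fintype V] [DecidableEq V]
    (G : SimpleGraph V) [DecidableRel G.Adj] : ℝ :=
  sInf {r | ∃ g : V → ℝ, (∑ v, g v) = 0 ∧ g ≠ 0 ∧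
    r = edgeEnergy G g / ∑ v, (g v) ^ 2}

/-!
On each edge, `f` changes by `g u - g v` over a segment of length `ℓ e ≥ 1/8`,
so the energy of `f` is at most `8` times the discrete energy. Since `f ≡ g v` on the disks
`B v` of volume `1/16` and `∑ g = 0`, for every constant `m` the integral `∫ (f - m)²` is at least
`(1/16) ∑ (g v - m)² ≥ (1/16) ∑ g v²`, as a mean-zero vector is the closest point to `0` on its
line `g - m·𝟙`. Dividing the two bounds compares the Rayleigh quotients with factor
`8 · 16 = 128`.
-/

lemma sym2_lift_sq_sub_nonneg {V : Type*} (g : V → ℝ) (e : Sym2 V) :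
    0 ≤ Sym2.lift ⟨fun u v => (g u - g v) ^ 2, fun u v => by ring⟩ e := by
  induction e using Sym2.ind with
  | _ u v => exact sq_nonneg (g u - g v)

lemma edgeEnergy_nonneg {V : Type*} [Fintype V] [DecidableEq V]
    (G : SimpleGraph V) [DecidableRel G.Adj] (g : V → ℝ) : 0 ≤ edgeEnergy G g :=
  sum_nonneg fun e _ => sym2_lift_sq_sub_nonneg g e

lemma Finset.sum_div_le_sum_div_of_le {ι : Type*} (s : Finset ι) {a ℓ : ι → ℝ} {c : ℝ}
    (hc : 0 < c) (ha : ∀ i ∈ s, 0 ≤ a i) (hℓ : ∀ i ∈ s, c ≤ ℓ i) :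
    ∑ i ∈ s, a i / ℓ i ≤ (∑ i ∈ s, a i) / c := by
  rw [sum_div]
  exact sum_le_sum fun i hi => div_le_div_of_nonneg_left (ha i hi) hc (hℓ i hi)

lemma Finset.sum_sq_le_sum_sub_sq_of_sum_eq_zero {ι : Type*} (s : Finset ι) {g : ι → ℝ}
    (hg : ∑ i ∈ s, g i = 0) (c : ℝ) :
    ∑ i ∈ s, g i ^ 2 ≤ ∑ i ∈ s, (g i - c) ^ 2 := by
  have hexpand :
      ∑ i ∈ s, (g i - c) ^ 2 = ∑ i ∈ s, g i ^ 2 - 2 * c * ∑ i ∈ s, g i + #s * c ^ 2 := by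
    simp only [sub_sq, sum_add_distrib, sum_sub_distrib, sum_const, nsmul_eq_mul, ← sum_mul,
      ← mul_sum]
    ring
  rw [hexpand, hg]
  nlinarith [sq_nonneg c, (Nat.cast_nonneg #s : (0 : ℝ) ≤ #s)]

lemma sum_measureReal_mul_le_integral {ι X : Type*} [Fintype ι] [MeasurableSpace X]
    {μ : Measure X} {F : X → ℝ} (hF : 0 ≤ F) (hFint : Integrable F μ)
    {B : ι → Set X} (hBmeas : ∀ i, MeasurableSet (B i))
    (hBdisj : Pairwise (Function.onFun Disjoint B))
    {c : ι → ℝ} (hFc : ∀ i, ∀ x ∈ B i, F x = c i) :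
    ∑ i, μ.real (B i) * c i ≤ ∫ x, F x ∂μ := by
  have hpiece : ∀ i, ∫ x in B i, F x ∂μ = μ.real (B i) * c i := fun i => by
    rw [setIntegral_congr_fun (hBmeas i) (hFc i), setIntegral_const, smul_eq_mul]
  calc ∑ i, μ.real (B i) * c i = ∫ x in ⋃ i, B i, F x ∂μ := by
        simp only [integral_iUnion_fintype hBmeas hBdisj fun i => hFint.integrableOn, hpiece]
    _ ≤ ∫ x, F x ∂μ := setIntegral_le_integral hFint (Filter.Eventually.of_forall hF)

/-- The metric graph `Γ` is modelled by a measure space `X`; the Dirichlet energy of `f` enters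
only through its value `Ef = ∑_e (g u − g v)² / ℓ e`, and `λ₁(Γ)` only through the variational
bound `lamΓ ≤ Ef / ∫ (f − m)²`. -/
theorem metric_graph_spectral_comparison {V : Type*} [Fintype V] [DecidableEq V]
    (Gbar : SimpleGraph V) [DecidableRel Gbar.Adj]
    (g : V → ℝ) (hg0 : ∑ v, g v = 0) (hgne : g ≠ 0)
    (hgopt : lambdaOne Gbar = edgeEnergy Gbar g / ∑ v, (g v) ^ 2)
    {X : Type*} [MeasurableSpace X] (μ : Measure X)
    (B : V → Set X) (hBmeas : ∀ v, MeasurableSet (B v))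
    (hBdisj : Pairwise (Function.onFun Disjoint B))
    (hBvol : ∀ v, μ (B v) = ENNReal.ofReal (1 / 16))
    (f : X → ℝ) (hfB : ∀ v, ∀ x ∈ B v, f x = g v)
    (ℓ : Sym2 V → ℝ) (hℓ : ∀ e ∈ Gbar.edgeSet, 1 / 8 ≤ ℓ e ∧ ℓ e ≤ 1 / 2)
    (Ef : ℝ)
    (hEf : Ef = ∑ e ∈ Gbar.edgeFinset,
      (Sym2.lift ⟨fun u v => (g u - g v) ^ 2, fun u v => by ring⟩ e) / ℓ e)
    (m : ℝ)
    (hf2 : Integrable (fun x => (f x - m) ^ 2) μ)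
    (lamΓ : ℝ) (hlamΓ : lamΓ ≤ Ef / ∫ x, (f x - m) ^ 2 ∂μ) :
    Ef ≤ 8 * edgeEnergy Gbar g ∧
      (1 / 16) * ∑ v, (g v) ^ 2 ≤ ∫ x, (f x - m) ^ 2 ∂μ ∧
      lamΓ ≤ 128 * lambdaOne Gbar := by
  have henergy : Ef ≤ 8 * edgeEnergy Gbar g := by
    have := sum_div_le_sum_div_of_le Gbar.edgeFinset (by norm_num : (0 : ℝ) < 1 / 8)
      (fun e _ => sym2_lift_sq_sub_nonneg g e)
      (fun e he => (hℓ e (SimpleGraph.mem_edgeFinset.mp he)).1)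
    rw [hEf, edgeEnergy]
    linarith
  have hvariance : (1 / 16) * ∑ v, (g v) ^ 2 ≤ ∫ x, (f x - m) ^ 2 ∂μ := by
    have hBreal : ∀ v, μ.real (B v) = 1 / 16 := fun v => by
      rw [measureReal_def, hBvol, ENNReal.toReal_ofReal (by norm_num)]
    calc (1 / 16) * ∑ v, (g v) ^ 2 ≤ (1 / 16) * ∑ v, (g v - m) ^ 2 := by
          gcongr ?_ * ?_
          exact sum_sq_le_sum_sub_sq_of_sum_eq_zero univ hg0 m
      _ = ∑ v, μ.real (B v) * (g v - m) ^ 2 := by simp only [hBreal, mul_sum]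
      _ ≤ ∫ x, (f x - m) ^ 2 ∂μ := sum_measureReal_mul_le_integral (fun x => sq_nonneg _) hf2
          hBmeas hBdisj fun v x hx => by rw [hfB v x hx]
  have hnorm_pos : 0 < ∑ v, (g v) ^ 2 := by
    obtain ⟨v, hv⟩ := Function.ne_iff.mp hgne
    exact sum_pos' (fun w _ => sq_nonneg (g w)) ⟨v, mem_univ v, sq_pos_of_ne_zero hv⟩
  refine ⟨henergy, hvariance, ?_⟩
  calc lamΓ ≤ Ef / ∫ x, (f x - m) ^ 2 ∂μ := hlamΓ
    _ ≤ 8 * edgeEnergy Gbar g / ((1 / 16) * ∑ v, (g v) ^ 2) :=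
        div_le_div₀ (by linarith [edgeEnergy_nonneg Gbar g]) henergy (by positivity) hvariance
    _ = 128 * lambdaOne Gbar := by rw [hgopt]; field_simp; ring
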